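/- arXiv:math/0004017 — 3 statements merged into one kernel-verified Lean document; each statement's English description precedes it below -/
import Mathlib

section
/- Let A be a commutative ring equipped with an ℕ-grading A = ⊕_{n∈ℕ} A_n, and suppose A is finitely generated as an algebra over its degree-zero subring A_0. Then there exists an integer m > 0 such that for every integer k > 0 the multiplication map from the k-fold product of A_m to A_{km} is surjective onto A_{km}; that is, the A_0-submodule A_{km} is spanned by products of k elements of A_m (equivalently, the k-th power of the submodule A_m equals A_{km} for all k > 0). -/
/-!
Choose finitely many homogeneous generators `x` of positive degrees `deg x` and a common multiple
`D` of these degrees. By pigeonhole, a monomial in the generators of degree greater than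
`#generators * D` contains some `x` at least `D / deg x` times, so it splits off a factor of degree
exactly `D`; hence `A_{n+D} = A_D A_n` once `n + D > #generators * D`. For
`m = (#generators + 1) * D` iterating this gives `A_{km} ⊆ A_D ^ ((k - 1) m / D) A_m ⊆ A_m ^ k`,
while `A_m ^ k ⊆ A_{km}` holds in any graded ring.
-/

open Submodule DirectSum Pointwise

theorem SetLike.multiset_prod_mem_graded {ι R S : Type*} [AddCommMonoid ι] [CommMonoid R]
    [SetLike S R] (𝒜 : ι → S) [SetLike.GradedMonoid 𝒜] {l : Multiset R} (deg : R → ι)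
    (h : ∀ x ∈ l, x ∈ 𝒜 (deg x)) : l.prod ∈ 𝒜 (l.map deg).sum := by
  induction l using Quotient.inductionOn with
  | h l => simpa using SetLike.list_prod_map_mem_graded l deg id h

theorem Multiset.exists_div_le_count_of_card_mul_lt_sum {α : Type*} [DecidableEq α]
    {s : Finset α} {l : Multiset α} (hl : ∀ x ∈ l, x ∈ s) (d : α → ℕ) {D : ℕ}
    (h : s.card * D < (l.map d).sum) : ∃ x ∈ l, D / d x ≤ l.count x := by
  by_contra! hlt
  have hterm : ∀ x ∈ l.toFinset, l.count x • d x ≤ D := fun x hx =>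
    calc l.count x * d x ≤ D / d x * d x :=
          Nat.mul_le_mul_right _ (hlt x (Multiset.mem_toFinset.1 hx)).le
      _ ≤ D := Nat.div_mul_le_self D (d x)
  have hsub : l.toFinset ⊆ s := fun x hx => hl x (Multiset.mem_toFinset.1 hx)
  have := calc (l.map d).sum = ∑ x ∈ l.toFinset, l.count x • d x :=
        Finset.sum_multiset_map_count l d
    _ ≤ ∑ _x ∈ l.toFinset, D := Finset.sum_le_sum hterm
    _ ≤ ∑ _x ∈ s, D := Finset.sum_le_sum_of_subset hsub
    _ = s.card * D := by rw [Finset.sum_const, smul_eq_mul]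
  omega

section GradedRing

variable {σ A : Type*} [CommRing A] [SetLike σ A] [AddSubgroupClass σ A] (𝒜 : ℕ → σ)
  [GradedRing 𝒜]

theorem span_graded_mul_span_graded_le (i j : ℕ) :
    span (𝒜 0) (𝒜 i : Set A) * span (𝒜 0) (𝒜 j : Set A) ≤ span (𝒜 0) (𝒜 (i + j) : Set A) := by
  rw [span_mul_span]
  exact span_mono (Set.mul_subset_iff.2 fun _ hx _ hy => SetLike.mul_mem_graded hx hy)

theorem span_graded_pow_le (i k : ℕ) :
    span (𝒜 0) (𝒜 i : Set A) ^ k ≤ span (𝒜 0) (𝒜 (k * i) : Set A) := by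
  induction k with
  | zero =>
    rw [Submodule.pow_zero, zero_mul, one_eq_span, span_le, Set.singleton_subset_iff]
    exact subset_span SetLike.GradedOne.one_mem
  | succ k ih =>
    rw [Submodule.pow_succ, Nat.succ_mul]
    exact le_trans (by gcongr) (span_graded_mul_span_graded_le 𝒜 _ _)

variable {𝒜} {s : Finset A} {deg : A → ℕ}

def monomialsOfDegree (s : Finset A) (deg : A → ℕ) (n : ℕ) : Set A :=
  {x | ∃ l : Multiset A, (∀ z ∈ l, z ∈ s) ∧ (l.map deg).sum = n ∧ l.prod = x}

theorem graded_subset_span_monomialsOfDegree (hs : Algebra.adjoin (𝒜 0) (s : Set A) = ⊤)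
    (hdeg : ∀ x ∈ s, x ∈ 𝒜 (deg x)) (n : ℕ) :
    (𝒜 n : Set A) ⊆ span (𝒜 0) (monomialsOfDegree s deg n) := by
  intro y hyn
  rw [← decompose_of_mem_same 𝒜 hyn]
  clear hyn
  have hy : y ∈ span (𝒜 0) (Submonoid.closure (s : Set A) : Set A) := by
    rw [← Algebra.adjoin_eq_span, hs]; trivial
  induction hy using span_induction with
  | mem y hy =>
    obtain ⟨l, hl, rfl⟩ := Submonoid.exists_multiset_of_mem_closure hy
    have hmem := SetLike.multiset_prod_mem_graded 𝒜 deg fun x hx => hdeg x (hl x hx)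
    by_cases hn : (l.map deg).sum = n
    · rw [decompose_of_mem_same 𝒜 (hn ▸ hmem)]
      exact subset_span ⟨l, hl, hn, rfl⟩
    · rw [decompose_of_mem_ne 𝒜 hmem hn]
      exact zero_mem _
  | zero => simp
  | add y z _ _ hy hz =>
    rw [decompose_add, DirectSum.add_apply, AddMemClass.coe_add]
    exact add_mem hy hz
  | smul r y _ hy =>
    rw [Algebra.smul_def, SetLike.GradeZero.algebraMap_apply,
      coe_decompose_mul_of_left_mem_zero 𝒜 r.2]
    exact smul_mem _ r hy

theorem monomialsOfDegree_subset_mul (hdeg : ∀ x ∈ s, x ∈ 𝒜 (deg x)) {D : ℕ}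
    (hD : ∀ x ∈ s, deg x ∣ D) {n : ℕ} (hn : s.card * D < n + D) :
    monomialsOfDegree s deg (n + D) ⊆ (𝒜 D : Set A) * (𝒜 n : Set A) := by
  classical
  rintro _ ⟨l, hl, hsum, rfl⟩
  obtain ⟨x, hxl, hx⟩ := Multiset.exists_div_le_count_of_card_mul_lt_sum hl deg (hsum ▸ hn)
  set r := Multiset.replicate (D / deg x) x
  have hr : r ≤ l := Multiset.le_count_iff_replicate_le.1 hx
  have hrdeg : (r.map deg).sum = D := by
    simp [r, Nat.div_mul_cancel (hD x (hl x hxl))]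
  have hrest : ((l - r).map deg).sum = n := by
    have := congrArg (fun t => (t.map deg).sum) (add_tsub_cancel_of_le hr)
    simp only [Multiset.map_add, Multiset.sum_add, hrdeg, hsum] at this
    omega
  have hmem : ∀ t ≤ l, t.prod ∈ 𝒜 (t.map deg).sum := fun t ht =>
    SetLike.multiset_prod_mem_graded 𝒜 deg fun y hy => hdeg y (hl y (Multiset.mem_of_le ht hy))
  rw [← add_tsub_cancel_of_le hr, Multiset.prod_add]
  exact Set.mul_mem_mul (hrdeg ▸ hmem r hr) (hrest ▸ hmem _ tsub_le_self)

theorem span_graded_add_le_mul (hs : Algebra.adjoin (𝒜 0) (s : Set A) = ⊤)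
    (hdeg : ∀ x ∈ s, x ∈ 𝒜 (deg x)) {D : ℕ} (hD : ∀ x ∈ s, deg x ∣ D) {n : ℕ}
    (hn : s.card * D < n + D) :
    span (𝒜 0) (𝒜 (n + D) : Set A) ≤ span (𝒜 0) (𝒜 D : Set A) * span (𝒜 0) (𝒜 n : Set A) := by
  rw [span_mul_span, span_le]
  exact (graded_subset_span_monomialsOfDegree hs hdeg _).trans
    (span_mono (monomialsOfDegree_subset_mul hdeg hD hn))

theorem span_graded_add_mul_le_pow_mul (hs : Algebra.adjoin (𝒜 0) (s : Set A) = ⊤)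
    (hdeg : ∀ x ∈ s, x ∈ 𝒜 (deg x)) {D : ℕ} (hD : ∀ x ∈ s, deg x ∣ D) {n : ℕ}
    (hn : s.card * D < n + D) (j : ℕ) :
    span (𝒜 0) (𝒜 (n + j * D) : Set A) ≤
      span (𝒜 0) (𝒜 D : Set A) ^ j * span (𝒜 0) (𝒜 n : Set A) := by
  induction j with
  | zero => simp
  | succ j ih =>
    calc span (𝒜 0) (𝒜 (n + (j + 1) * D) : Set A)
        = span (𝒜 0) (𝒜 (n + j * D + D) : Set A) := by rw [Nat.succ_mul, add_assoc]
      _ ≤ span (𝒜 0) (𝒜 D : Set A) * span (𝒜 0) (𝒜 (n + j * D) : Set A) :=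
          span_graded_add_le_mul hs hdeg hD (by omega)
      _ ≤ span (𝒜 0) (𝒜 D : Set A) *
            (span (𝒜 0) (𝒜 D : Set A) ^ j * span (𝒜 0) (𝒜 n : Set A)) := by
          gcongr
      _ = span (𝒜 0) (𝒜 D : Set A) ^ (j + 1) * span (𝒜 0) (𝒜 n : Set A) := by
          rw [← mul_assoc, Submodule.pow_succ]; ring

variable (𝒜) in
theorem exists_span_graded_pow_eq [Algebra.FiniteType (𝒜 0) A] :
    ∃ m : ℕ, 0 < m ∧ ∀ k : ℕ, 0 < k →
      span (𝒜 0) (𝒜 m : Set A) ^ k = span (𝒜 0) (𝒜 (k * m) : Set A) := by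
  obtain ⟨s, hs, hhom⟩ := GradedAlgebra.exists_finset_adjoin_eq_top_and_homogeneous_ne_zero 𝒜
  choose! deg hdeg0 hdeg using hhom
  set D := ∏ x ∈ s, deg x
  have hD : ∀ x ∈ s, deg x ∣ D := fun x hx => Finset.dvd_prod_of_mem deg hx
  have hD0 : 0 < D := Finset.prod_pos fun x hx => Nat.pos_of_ne_zero (hdeg0 x hx)
  set c := s.card + 1
  have hcD : s.card * D < c * D + D :=
    lt_add_of_le_of_pos (Nat.mul_le_mul_right D s.card.le_succ) hD0
  refine ⟨c * D, by positivity, fun k hk => le_antisymm (span_graded_pow_le 𝒜 _ _) ?_⟩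
  obtain ⟨k, rfl⟩ := Nat.exists_eq_add_one_of_ne_zero hk.ne'
  calc span (𝒜 0) (𝒜 ((k + 1) * (c * D)) : Set A)
      = span (𝒜 0) (𝒜 (c * D + c * k * D) : Set A) := by ring_nf
    _ ≤ span (𝒜 0) (𝒜 D : Set A) ^ (c * k) * span (𝒜 0) (𝒜 (c * D) : Set A) :=
        span_graded_add_mul_le_pow_mul hs hdeg hD hcD _
    _ = (span (𝒜 0) (𝒜 D : Set A) ^ c) ^ k * span (𝒜 0) (𝒜 (c * D) : Set A) :=
        congrArg (· * _) (pow_mul (span (𝒜 0) (𝒜 D : Set A)) c k)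
    _ ≤ span (𝒜 0) (𝒜 (c * D) : Set A) ^ k * span (𝒜 0) (𝒜 (c * D) : Set A) :=
        mul_le_mul_left (pow_le_pow_left' (span_graded_pow_le 𝒜 D c) k) _
    _ = span (𝒜 0) (𝒜 (c * D) : Set A) ^ (k + 1) := rfl

end GradedRing

/-- **Lemma 1.5** of Hu–Keel, "Mori Dream Spaces and GIT".
Let `A` be a commutative ring with an `ℕ`-grading `A = ⊕ₙ Aₙ`, finitely generated as an
algebra over its degree-zero subring `A₀`.  Then there is an `m > 0` such that for all `k > 0`
the multiplication map `Symᵏ A_m → A_{km}` is surjective, i.e. the `A₀`-submodule of `A`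
spanned by `A_m`, raised to the `k`-th power, equals the `A₀`-submodule spanned by `A_{km}`. -/
theorem graded_ring_power_of_piece_eventually_surjective
    {A : Type*} [CommRing A] (𝒜 : ℕ → AddSubgroup A) [GradedRing 𝒜]
    (hfg : Algebra.FiniteType (SetLike.GradeZero.subring 𝒜) A) :
    ∃ m : ℕ, 0 < m ∧ ∀ k : ℕ, 0 < k →
      (Submodule.span (SetLike.GradeZero.subring 𝒜) (𝒜 m : Set A)) ^ k =
        Submodule.span (SetLike.GradeZero.subring 𝒜) (𝒜 (k * m) : Set A) := by
  have : Algebra.FiniteType (𝒜 0) A := hfg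
  exact exists_span_graded_pow_eq 𝒜
end

section
/- Let k and K be fields, let A be a commutative k-algebra graded by the additive group M = ℤ^r, and let h : A → K be a ring homomorphism. Let v, v_1, …, v_d be elements of M and m > 0 an integer with v_1 + ⋯ + v_d = m•v. Suppose that for every integer n > 0, the graded piece A_{(nm)•v} is spanned (as an additive group, equivalently as a k-module) by the products a_1·a_2·⋯·a_d with a_i ∈ A_{n•v_i}. Then the following are equivalent: (i) there exists n > 0 and a ∈ A_{n•v} with h(a) ≠ 0; (ii) for every index i ∈ {1,…,d} there exists n > 0 and a ∈ A_{n•v_i} with h(a) ≠ 0. -/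
/-- The semistability claim in the proof of Proposition 2.9 of Hu–Keel,
"Mori Dream Spaces and GIT".  Let `A` be a commutative `k`-algebra graded by `M = ℤ^r`,
`h : A →+* K` a ring homomorphism to a field, and `v, v₁, …, v_d ∈ M`, `m > 0` with
`v₁ + ⋯ + v_d = m • v`.  If for every `n > 0` the graded piece `A_{(n*m) • v}` is spanned over
`k` by the products `a₁ ⋯ a_d` with `aᵢ ∈ A_{n • vᵢ}`, then `h` is nonvanishing on `A_{n • v}`
for some `n > 0` iff for every `i` it is nonvanishing on `A_{n • vᵢ}` for some `n > 0`. -/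
theorem semistable_iff_semistable_of_span_products
    {k K A : Type*} [Field k] [Field K] [CommRing A] [Algebra k A]
    {r : ℕ} (𝒜 : (Fin r → ℤ) → Submodule k A) [GradedAlgebra 𝒜]
    (h : A →+* K)
    {d : ℕ} (v : Fin r → ℤ) (w : Fin d → (Fin r → ℤ)) (m : ℕ) (hm : 0 < m)
    (hsum : ∑ i, w i = m • v)
    (hspan : ∀ n : ℕ, 0 < n → ∀ x ∈ 𝒜 ((n * m) • v),
      x ∈ Submodule.span k
        {y : A | ∃ a : Fin d → A, (∀ i, a i ∈ 𝒜 (n • w i)) ∧ y = ∏ i, a i}) :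
    (∃ n : ℕ, 0 < n ∧ ∃ a ∈ 𝒜 (n • v), h a ≠ 0) ↔
      (∀ i : Fin d, ∃ n : ℕ, 0 < n ∧ ∃ a ∈ 𝒜 (n • w i), h a ≠ 0) := by
  constructor
  · rintro ⟨n, hn, a, ha, hha⟩ i
    refine ⟨n, hn, ?_⟩
    by_contra hcon
    push_neg at hcon
    have hpow : a ^ m ∈ 𝒜 ((n * m) • v) := by
      have := SetLike.pow_mem_graded m ha
      rwa [smul_smul, mul_comm] at this
    have hmem := hspan n hn _ hpow
    have hzero : h (a ^ m) = 0 := by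
      refine Submodule.span_induction (p := fun x _ => h x = 0) ?_ ?_ ?_ ?_ hmem
      · rintro y ⟨b, hb, rfl⟩
        rw [map_prod]
        exact Finset.prod_eq_zero (Finset.mem_univ i) (hcon _ (hb i))
      · exact map_zero h
      · intro x y _ _ hx hy; rw [map_add, hx, hy, add_zero]
      · intro c x _ hx
        rw [Algebra.smul_def, map_mul, hx, mul_zero]
    rw [map_pow] at hzero
    exact hha (pow_eq_zero_iff hm.ne' |>.mp hzero)
  · intro hi
    choose n hn a ha hha using hi
    have hNpos : 0 < ∏ j, n j := Finset.prod_pos fun j _ => hn j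
    refine ⟨(∏ j, n j) * m, Nat.mul_pos hNpos hm,
      ∏ j, a j ^ (∏ t ∈ Finset.univ.erase j, n t), ?_, ?_⟩
    · have hmem : ∀ j ∈ Finset.univ,
          a j ^ (∏ t ∈ Finset.univ.erase j, n t) ∈ 𝒜 ((∏ t, n t) • w j) := by
        intro j _
        have := SetLike.pow_mem_graded (∏ t ∈ Finset.univ.erase j, n t) (ha j)
        rwa [smul_smul, Finset.prod_erase_mul _ _ (Finset.mem_univ j)] at this
      have := SetLike.prod_mem_graded 𝒜 _ _ hmem
      rwa [← Finset.smul_sum, hsum, smul_smul] at this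
    · rw [map_prod]
      refine Finset.prod_ne_zero_iff.2 fun j _ => ?_
      rw [map_pow]
      exact pow_ne_zero _ (hha j)
end

section
/- Let k be a field and let A be a commutative k-algebra graded by the additive group M = ℤ^r. Let h : A → k be a k-algebra homomorphism. Suppose there exist v_1, …, v_r ∈ M generating M = ℤ^r as a group, such that for each j there exist an integer n_j > 0 and an element a ∈ A_{n_j • v_j} with h(a) ≠ 0. Then the group of characters λ : ℤ^r → kˣ satisfying λ(m) · h(a) = h(a) for every m ∈ M and every a ∈ A_m is a finite group. -/
/-!
A character `χ` fixing `h` is trivial on every degree `m` in which `h` does not vanish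
identically, so `χ (v j)` is an `n j`-th root of unity. Since the `v j` generate `ℤ^r`,
`χ` is determined by these finitely many roots of unity, of which there are finitely many.
-/

open Multiplicative

theorem MonoidHom.injective_eval_of_addSubgroup_closure_eq_top {M G ι : Type*} [AddGroup M]
    [Group G] {v : ι → M} (hgen : AddSubgroup.closure (Set.range v) = ⊤) :
    Function.Injective fun (χ : Multiplicative M →* G) (j : ι) => χ (ofAdd (v j)) := by
  intro χ ψ hχψ
  refine MonoidHom.eq_of_eqOn_dense (s := toAdd ⁻¹' Set.range v) ?_ ?_
  · rw [← AddSubgroup.toSubgroup_closure, hgen, map_top]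
  · rintro x ⟨j, hj⟩
    rw [← ofAdd_toAdd x, ← hj]
    exact congrFun hχψ j

theorem Units.finite_setOf_pow_eq_one {R : Type*} [CommRing R] [IsDomain R] {n : ℕ}
    (hn : 0 < n) : {u : Rˣ | u ^ n = 1}.Finite := by
  have : NeZero n := ⟨hn.ne'⟩
  refine (Set.finite_range ((↑) : rootsOfUnity n R → Rˣ)).subset fun u hu => ?_
  exact ⟨⟨u, (mem_rootsOfUnity n u).mpr hu⟩, rfl⟩

theorem MonoidHom.finite_setOf_pow_apply_eq_one {M R ι : Type*} [AddGroup M] [CommRing R]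
    [IsDomain R] [Finite ι] {v : ι → M} (hgen : AddSubgroup.closure (Set.range v) = ⊤)
    {n : ι → ℕ} (hn : ∀ j, 0 < n j) :
    {χ : Multiplicative M →* Rˣ | ∀ j, χ (ofAdd (v j)) ^ n j = 1}.Finite :=
  (Set.Finite.pi' fun j => Units.finite_setOf_pow_eq_one (hn j)).preimage
    (injective_eval_of_addSubgroup_closure_eq_top hgen).injOn

theorem finite_stabilizer_of_semistable_for_generating_characters_general
    {k A : Type*} [Field k] [CommRing A] [Algebra k A]
    {r : ℕ} (𝒜 : (Fin r → ℤ) → Submodule k A)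
    (h : A →ₐ[k] k)
    (v : Fin r → (Fin r → ℤ))
    (hgen : AddSubgroup.closure (Set.range v) = ⊤)
    (hss : ∀ j : Fin r, ∃ n : ℕ, 0 < n ∧ ∃ a ∈ 𝒜 (n • v j), h a ≠ 0) :
    {χ : Multiplicative (Fin r → ℤ) →* kˣ |
      ∀ (m : Fin r → ℤ), ∀ a ∈ 𝒜 m,
        (χ (Multiplicative.ofAdd m) : k) * h a = h a}.Finite := by
  choose n hn a ha hha using hss
  refine (MonoidHom.finite_setOf_pow_apply_eq_one hgen hn).subset fun χ hχ j => ?_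
  have hfix : χ (ofAdd (n j • v j)) = 1 :=
    Units.ext <| mul_right_cancel₀ (hha j) ((hχ _ _ (ha j)).trans (one_mul _).symm)
  rwa [ofAdd_nsmul, map_pow] at hfix

/-- The finite-stabilizer claim in the proof of Proposition 2.9 of Hu–Keel,
"Mori Dream Spaces and GIT".  Let `A` be a commutative `k`-algebra graded by `M = ℤ^r` and
`h : A → k` a `k`-algebra homomorphism.  Suppose `v₁, …, v_r` generate `ℤ^r` as a group and
for each `j` there are `n_j > 0` and `a ∈ A_{n_j • v_j}` with `h a ≠ 0`.  Then the group of
characters `λ : ℤ^r → kˣ` fixing `h` (i.e. with `λ m • h a = h a` for all `m` and all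
`a ∈ A_m`) is finite. -/
theorem finite_stabilizer_of_semistable_for_generating_characters
    {k A : Type*} [Field k] [CommRing A] [Algebra k A]
    {r : ℕ} (𝒜 : (Fin r → ℤ) → Submodule k A) [GradedAlgebra 𝒜]
    (h : A →ₐ[k] k)
    (v : Fin r → (Fin r → ℤ))
    (hgen : AddSubgroup.closure (Set.range v) = ⊤)
    (hss : ∀ j : Fin r, ∃ n : ℕ, 0 < n ∧ ∃ a ∈ 𝒜 (n • v j), h a ≠ 0) :
    {χ : Multiplicative (Fin r → ℤ) →* kˣ |
      ∀ (m : Fin r → ℤ), ∀ a ∈ 𝒜 m,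
        (χ (Multiplicative.ofAdd m) : k) * h a = h a}.Finite :=
  finite_stabilizer_of_semistable_for_generating_characters_general 𝒜 h v hgen hss
end
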